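/- arXiv:2209.13686 — 4 statements merged into one kernel-verified Lean document; each statement's English description precedes it below -/
import Mathlib

section
/- Let σ be a uniformly random permutation of a finite set H_0 ⊆ {1,...,m} (extended by the identity outside H_0), independent of the p-values p_1,...,p_m, and let m_0 = #H_0. If (1/m)·Σ_{i∈H_0} P(p_i ≤ t) ≤ t for all t ∈ [0,1], then the rescaled permuted p-values p̃_i = (m/m_0)·p_{σ(i)} satisfy P(p̃_i ≤ α) ≤ α for every i ∈ H_0 and every α ∈ [0,1]. -/
/-!
Splitting the event `p_{σ(i)} ≤ t` according to the value `g` of `σ`, independence and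
uniformity bound its probability by `(m₀!)⁻¹ ∑_g P(p_{g(i)} ≤ t)`. As `g` runs over the
permutations of `H₀`, `g(i)` hits every `j ∈ H₀` equally often, so this is the average
`m₀⁻¹ ∑_{j ∈ H₀} P(p_j ≤ t)`, which average level control bounds by `(m / m₀) t`.
Take `t = (m₀ / m) α`.
-/

open MeasureTheory Set ENNReal Finset Nat

def permsFixingCompl {α : Type*} [Fintype α] [DecidableEq α] (s : Finset α) :
    Finset (Equiv.Perm α) :=
  univ.filter fun g => ∀ k ∉ s, g k = k

namespace permsFixingCompl

variable {α : Type*} [Fintype α] [DecidableEq α] {s : Finset α} {g : Equiv.Perm α}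

theorem mem_iff : g ∈ permsFixingCompl s ↔ ∀ k ∉ s, g k = k := by
  simp [permsFixingCompl]

theorem card_eq (s : Finset α) : #(permsFixingCompl s) = (#s)! := by
  rw [permsFixingCompl, ← Fintype.card_subtype,
    ← Fintype.card_congr (Equiv.Perm.subtypeEquivSubtypePerm (· ∈ s)),
    Fintype.card_perm, Fintype.card_coe]

theorem mul_swap_mem (hg : g ∈ permsFixingCompl s) {i j : α} (hi : i ∈ s) (hj : j ∈ s) :
    g * Equiv.swap i j ∈ permsFixingCompl s := by
  rw [mem_iff] at hg ⊢
  intro k hk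
  rw [Equiv.Perm.mul_apply, Equiv.swap_apply_of_ne_of_ne (ne_of_mem_of_not_mem hi hk).symm
    (ne_of_mem_of_not_mem hj hk).symm, hg k hk]

theorem sum_apply_eq {M : Type*} [AddCommMonoid M] (f : α → M) {i j : α} (hi : i ∈ s)
    (hj : j ∈ s) :
    ∑ g ∈ permsFixingCompl s, f (g i) = ∑ g ∈ permsFixingCompl s, f (g j) := by
  refine sum_nbij' (· * Equiv.swap i j) (· * Equiv.swap i j) (fun g hg ↦ mul_swap_mem hg hi hj)
    (fun g hg ↦ mul_swap_mem hg hi hj) (fun g _ ↦ ?_) (fun g _ ↦ ?_) (fun g _ ↦ ?_) <;>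
    simp [mul_assoc]

theorem sum_comp_eq {M : Type*} [AddCommMonoid M] (f : α → M) (hg : g ∈ permsFixingCompl s) :
    ∑ j ∈ s, f (g j) = ∑ j ∈ s, f j :=
  g.sum_comp s f fun k hk ↦ by_contra fun hks ↦ hk (mem_iff.1 hg k hks)

-- `∑_g f (g i)` does not depend on `i ∈ s`, so it is the average over `i ∈ s`.
theorem card_nsmul_sum_apply {M : Type*} [AddCommMonoid M] (f : α → M) {i : α} (hi : i ∈ s) :
    #s • ∑ g ∈ permsFixingCompl s, f (g i) = (#s)! • ∑ j ∈ s, f j := by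
  calc #s • ∑ g ∈ permsFixingCompl s, f (g i)
      = ∑ j ∈ s, ∑ g ∈ permsFixingCompl s, f (g j) := by
        rw [← sum_const, sum_congr rfl fun j hj ↦ sum_apply_eq f hi hj]
    _ = ∑ g ∈ permsFixingCompl s, ∑ j ∈ s, f j := by
        rw [sum_comm]; exact sum_congr rfl fun g hg ↦ sum_comp_eq f hg
    _ = (#s)! • ∑ j ∈ s, f j := by rw [sum_const, card_eq]

end permsFixingCompl

theorem measureReal_mem_perm_apply_le {Ω α : Type*} [MeasurableSpace Ω] [Fintype α]
    [DecidableEq α] (μ : Measure Ω) [IsFiniteMeasure μ] (s : Finset α)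
    (σ : Ω → Equiv.Perm α) (A : α → Set Ω)
    (hfix : ∀ ω, ∀ k ∉ s, σ ω k = k)
    (hunif : ∀ g : Equiv.Perm α, (∀ k ∉ s, g k = k) →
      μ {ω | σ ω = g} = ((#s)! : ℝ≥0∞)⁻¹)
    (hindep : ∀ g j, μ ({ω | σ ω = g} ∩ A j) = μ {ω | σ ω = g} * μ (A j))
    {i : α} (hi : i ∈ s) :
    μ.real {ω | ω ∈ A (σ ω i)} ≤ (#s : ℝ)⁻¹ * ∑ j ∈ s, μ.real (A j) := by
  have hs : (0 : ℝ) < #s := by exact_mod_cast card_pos.2 ⟨i, hi⟩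
  have hcount := permsFixingCompl.card_nsmul_sum_apply (fun j ↦ μ.real (A j)) hi
  rw [nsmul_eq_mul, nsmul_eq_mul] at hcount
  calc μ.real {ω | ω ∈ A (σ ω i)}
      ≤ μ.real (⋃ g ∈ permsFixingCompl s, {ω | σ ω = g} ∩ A (g i)) :=
        measureReal_mono (fun ω hω ↦ mem_biUnion
          (permsFixingCompl.mem_iff.2 (hfix ω)) ⟨rfl, hω⟩) (measure_ne_top μ _)
    _ ≤ ∑ g ∈ permsFixingCompl s, μ.real ({ω | σ ω = g} ∩ A (g i)) :=
        measureReal_biUnion_finset_le _ _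
    _ = ((#s)! : ℝ)⁻¹ * ∑ g ∈ permsFixingCompl s, μ.real (A (g i)) := by
        rw [mul_sum]
        refine sum_congr rfl fun g hg ↦ ?_
        simp only [measureReal_def, hindep, hunif g (permsFixingCompl.mem_iff.1 hg),
          toReal_mul, toReal_inv, toReal_natCast]
    _ = (#s : ℝ)⁻¹ * ∑ j ∈ s, μ.real (A j) := by
        field_simp
        linear_combination hcount

theorem stmt1_general {Ω : Type} [MeasurableSpace Ω] (μ : Measure Ω) [IsProbabilityMeasure μ]
    (m : ℕ) (p : Fin m → Ω → ℝ)
    (H0 : Finset (Fin m))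
    (σ : Ω → Equiv.Perm (Fin m))
    (hfix : ∀ ω, ∀ i, i ∉ H0 → σ ω i = i)
    (hunif : ∀ g : Equiv.Perm (Fin m), (∀ i, i ∉ H0 → g i = i) →
      μ {ω | σ ω = g} = ((Nat.factorial H0.card : ℝ≥0∞))⁻¹)
    (hindep : ∀ (g : Equiv.Perm (Fin m)) (j : Fin m) (c : ℝ),
      μ ({ω | σ ω = g} ∩ {ω | p j ω ≤ c}) = μ {ω | σ ω = g} * μ {ω | p j ω ≤ c})
    (havg : ∀ t ∈ Set.Icc (0:ℝ) 1,
      (1 / m : ℝ) * ∑ i ∈ H0, (μ {ω | p i ω ≤ t}).toReal ≤ t) :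
    ∀ i ∈ H0, ∀ α ∈ Set.Icc (0:ℝ) 1,
      (μ {ω | ((m : ℝ) / H0.card) * p (σ ω i) ω ≤ α}).toReal ≤ α := by
  intro i hi α ⟨hα0, hα1⟩
  have hm0 : (0 : ℝ) < #H0 := by exact_mod_cast card_pos.2 ⟨i, hi⟩
  have hm0m : (#H0 : ℝ) ≤ m := by exact_mod_cast (card_le_univ H0).trans_eq (Fintype.card_fin m)
  have hm : (0 : ℝ) < m := hm0.trans_le hm0m
  set c : ℝ := m / #H0
  have hc : 1 ≤ c := (one_le_div hm0).2 hm0m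
  set t := α / c
  have havg_t := havg t ⟨by positivity, (div_le_self hα0 hc).trans hα1⟩
  rw [one_div, inv_mul_le_iff₀ hm] at havg_t
  calc μ.real {ω | c * p (σ ω i) ω ≤ α}
      = μ.real {ω | ω ∈ {ω' | p (σ ω i) ω' ≤ t}} := by
        simp_rw [t, le_div_iff₀' (zero_lt_one.trans_le hc)]; rfl
    _ ≤ (#H0 : ℝ)⁻¹ * ∑ j ∈ H0, μ.real {ω | p j ω ≤ t} :=
        measureReal_mem_perm_apply_le μ H0 σ _ hfix hunif (fun g j ↦ hindep g j t) hi
    _ ≤ (#H0 : ℝ)⁻¹ * (m * t) := by gcongr; exact havg_t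
    _ = α := by simp only [t, c]; field_simp

/-- A uniformly random permutation `σ` of `H0` (identity outside `H0`), independent of the
p-values, turns average significance level control into classical significance level control
for the rescaled permuted p-values `p̃_i = (m/m₀)·p_{σ(i)}`. -/
theorem stmt1 {Ω : Type} [MeasurableSpace Ω] (μ : Measure Ω) [IsProbabilityMeasure μ]
    (m : ℕ) (hm : 0 < m) (p : Fin m → Ω → ℝ)
    (hp : ∀ i ω, p i ω ∈ Set.Icc (0:ℝ) 1)
    (H0 : Finset (Fin m)) (hH0 : H0.Nonempty)
    (σ : Ω → Equiv.Perm (Fin m))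
    (hfix : ∀ ω, ∀ i, i ∉ H0 → σ ω i = i)
    (hunif : ∀ g : Equiv.Perm (Fin m), (∀ i, i ∉ H0 → g i = i) →
      μ {ω | σ ω = g} = ((Nat.factorial H0.card : ℝ≥0∞))⁻¹)
    (hindep : ∀ (g : Equiv.Perm (Fin m)) (j : Fin m) (c : ℝ),
      μ ({ω | σ ω = g} ∩ {ω | p j ω ≤ c}) = μ {ω | σ ω = g} * μ {ω | p j ω ≤ c})
    (havg : ∀ t ∈ Set.Icc (0:ℝ) 1,
      (1 / m : ℝ) * ∑ i ∈ H0, (μ {ω | p i ω ≤ t}).toReal ≤ t) :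
    ∀ i ∈ H0, ∀ α ∈ Set.Icc (0:ℝ) 1,
      (μ {ω | ((m : ℝ) / H0.card) * p (σ ω i) ω ≤ α}).toReal ≤ α :=
  stmt1_general μ m p H0 σ hfix hunif hindep havg
end

section
/- Fix m ≥ 2 and 0 < q < 2/3. There exists a joint distribution P of p-values (p_1,...,p_m) on [0,1]^m, with the p_i independent, satisfying average significance level control (1/m)·Σ_{i=1}^m P(p_i ≤ t) ≤ t for all t ∈ [0,1] with H_0 = {1,...,m}, such that the Benjamini–Hochberg procedure at level q has FDR strictly greater than q (indeed FDR ≥ q + (q/(2m))²). -/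
open MeasureTheory ProbabilityTheory Set

/-- Number of p-values at most `t`. -/
noncomputable def rejCount (m : ℕ) (pv : Fin m → ℝ) (t : ℝ) : ℕ :=
  Set.ncard {i : Fin m | pv i ≤ t}

/-- The set of candidate cutoffs for the Benjamini–Hochberg procedure at level `q`:
those `t ∈ [0,1]` with `m·t/(R(t) ∨ 1) ≤ q`. -/
noncomputable def bhSet (m : ℕ) (q : ℝ) (pv : Fin m → ℝ) : Set ℝ :=
  {t : ℝ | t ∈ Set.Icc (0:ℝ) 1 ∧ (m : ℝ) * t / max (rejCount m pv t : ℝ) 1 ≤ q}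

/-- The Benjamini–Hochberg cutoff `t̂ = max{t : m·t/(R(t) ∨ 1) ≤ q}`. -/
noncomputable def bhCutoff (m : ℕ) (q : ℝ) (pv : Fin m → ℝ) : ℝ :=
  sSup (bhSet m q pv)

/-! Under the global null, BH rejects something iff some `k ≥ 1` has `R(qk/m) ≥ k`, so its FDR
is the probability of that event. Let `p₀` have density `m` on `[0, 3q/(2m)]` and `p₁` density
`m` on `[3q/(2m), 2q/m]`, all remaining mass sitting at `1`. The densities live on disjoint
windows, which gives average significance control. But `P(p₀ ≤ q/m) = q`, and independently
`P(q/m < p₀ ≤ 2q/m) = P(p₁ ≤ 2q/m) = q/2`, so the FDR is at least `q + q²/4`. -/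

namespace BH

variable {m : ℕ} (pv : Fin m → ℝ)

lemma rejCount_le (t : ℝ) : rejCount m pv t ≤ m := by
  simpa [rejCount, Set.ncard_univ] using
    Set.ncard_le_ncard (Set.subset_univ {i | pv i ≤ t}) Set.finite_univ

lemma rejCount_mono : Monotone (rejCount m pv) :=
  fun _ _ hst => Set.ncard_le_ncard (fun _ hi => le_trans hi hst) (Set.toFinite _)

lemma card_le_rejCount {s : Finset (Fin m)} {t : ℝ} (hs : ∀ i ∈ s, pv i ≤ t) :
    s.card ≤ rejCount m pv t := by
  rw [← Set.ncard_coe_finset]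
  exact Set.ncard_le_ncard hs (Set.toFinite _)

lemma measurable_rejCount {Ω : Type*} [MeasurableSpace Ω] {p : Fin m → Ω → ℝ}
    (hp : ∀ i, Measurable (p i)) (t : ℝ) :
    Measurable fun ω => rejCount m (fun i => p i ω) t := by
  classical
  have hsum : (fun ω => rejCount m (fun i => p i ω) t) =
      fun ω => ∑ i, if p i ω ≤ t then 1 else 0 := by
    funext ω
    rw [rejCount, ← Finset.coe_filter_univ, Set.ncard_coe_finset, Finset.card_filter]
  rw [hsum]
  exact Finset.measurable_sum _ fun i _ =>
    Measurable.ite (measurableSet_le (hp i) measurable_const) measurable_const measurable_const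

def StepUpRejects (q : ℝ) : Prop := ∃ k : ℕ, 1 ≤ k ∧ k ≤ rejCount m pv (q * k / m)

lemma stepUpRejects_of_card {q : ℝ} {s : Finset (Fin m)} (hs : s.Nonempty)
    (h : ∀ i ∈ s, pv i ≤ q * s.card / m) : StepUpRejects pv q :=
  ⟨s.card, hs.card_pos, card_le_rejCount pv h⟩

lemma mem_bhSet_of_le_rejCount {q : ℝ} (hq0 : 0 ≤ q) (hq1 : q ≤ 1) {k : ℕ} (hk : 1 ≤ k)
    (hkR : k ≤ rejCount m pv (q * k / m)) : q * k / m ∈ bhSet m q pv := by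
  have hkm : (k : ℝ) ≤ m := by exact_mod_cast hkR.trans (rejCount_le pv _)
  have hk1 : (1 : ℝ) ≤ k := by exact_mod_cast hk
  have hkR' : (k : ℝ) ≤ rejCount m pv (q * k / m) := by exact_mod_cast hkR
  have hm : (0 : ℝ) < m := by linarith
  refine ⟨⟨by positivity, (div_le_one hm).2 (by nlinarith)⟩, ?_⟩
  rw [mul_div_cancel₀ _ hm.ne', div_le_iff₀ (by positivity)]
  nlinarith [le_max_left (rejCount m pv (q * k / m) : ℝ) 1]

lemma bhSet_bddAbove (q : ℝ) : BddAbove (bhSet m q pv) := ⟨1, fun _ ht => ht.1.2⟩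

lemma zero_mem_bhSet {q : ℝ} (hq0 : 0 ≤ q) : (0 : ℝ) ∈ bhSet m q pv :=
  ⟨⟨le_rfl, zero_le_one⟩, by simpa using hq0⟩

lemma le_bhCutoff_of_le_rejCount {q : ℝ} (hq0 : 0 ≤ q) (hq1 : q ≤ 1) {k : ℕ} (hk : 1 ≤ k)
    (hkR : k ≤ rejCount m pv (q * k / m)) : k ≤ rejCount m pv (bhCutoff m q pv) :=
  hkR.trans <| rejCount_mono pv <|
    le_csSup (bhSet_bddAbove pv q) (mem_bhSet_of_le_rejCount pv hq0 hq1 hk hkR)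

/-- Every admissible cutoff `t` has `m t ≤ q R(t) ≤ q R(t̂)`. -/
lemma bhCutoff_le {q : ℝ} (hq0 : 0 ≤ q) (hR : 1 ≤ rejCount m pv (bhCutoff m q pv)) :
    bhCutoff m q pv ≤ q * rejCount m pv (bhCutoff m q pv) / m := by
  set k := rejCount m pv (bhCutoff m q pv)
  have hm : (0 : ℝ) < m := by exact_mod_cast hR.trans (rejCount_le pv _)
  have hk : (1 : ℝ) ≤ k := by exact_mod_cast hR
  refine csSup_le ⟨0, zero_mem_bhSet pv hq0⟩ fun t ht => ?_
  have hRt : (rejCount m pv t : ℝ) ≤ k := by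
    exact_mod_cast rejCount_mono pv (le_csSup (bhSet_bddAbove pv q) ht)
  have hmt := (div_le_iff₀ (by positivity)).1 ht.2
  rw [le_div_iff₀ hm]
  nlinarith [max_le hRt hk]

lemma one_le_rejCount_bhCutoff_iff {q : ℝ} (hq0 : 0 ≤ q) (hq1 : q ≤ 1) :
    1 ≤ rejCount m pv (bhCutoff m q pv) ↔ StepUpRejects pv q := by
  constructor
  · intro hR
    exact ⟨_, hR, rejCount_mono pv (bhCutoff_le pv hq0 hR)⟩
  · rintro ⟨k, hk, hkR⟩
    exact hk.trans (le_bhCutoff_of_le_rejCount pv hq0 hq1 hk hkR)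

lemma natCast_div_max_one (n : ℕ) : (n : ℝ) / max (n : ℝ) 1 = if 1 ≤ n then 1 else 0 := by
  rcases Nat.eq_zero_or_pos n with rfl | hn
  · simp
  · have hn' : (1 : ℝ) ≤ n := by exact_mod_cast hn
    rw [if_pos (show 1 ≤ n from hn), max_eq_left hn', div_self (by positivity)]

/-- The integrand is the false discovery proportion of BH when every hypothesis is null. -/
theorem integral_fdp_bh_eq {Ω : Type*} [MeasurableSpace Ω] (μ : Measure Ω)
    {p : Fin m → Ω → ℝ} (hp : ∀ i, Measurable (p i)) {q : ℝ} (hq0 : 0 ≤ q) (hq1 : q ≤ 1) :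
    ∫ ω, (rejCount m (fun i => p i ω) (bhCutoff m q (fun i => p i ω)) : ℝ) /
        max (rejCount m (fun i => p i ω) (bhCutoff m q (fun i => p i ω)) : ℝ) 1 ∂μ =
      μ.real {ω | StepUpRejects (fun i => p i ω) q} := by
  have hmeas : MeasurableSet {ω | StepUpRejects (fun i => p i ω) q} :=
    Measurable.setOf <| Measurable.exists fun k => measurable_const.and <|
      measurableSet_setOfPred.1 <| measurableSet_le measurable_const (measurable_rejCount hp _)
  rw [← integral_indicator_one hmeas]
  congr 1 with ω
  have hiff := one_le_rejCount_bhCutoff_iff (fun i => p i ω) hq0 hq1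
  rw [natCast_div_max_one]
  by_cases h : ω ∈ {ω | StepUpRejects (fun i => p i ω) q}
  · rw [Set.indicator_of_mem h, if_pos (hiff.2 h), Pi.one_apply]
  · rw [Set.indicator_of_notMem h, if_neg (mt hiff.1 h)]

end BH

noncomputable def unitUniform : Measure ℝ := volume.restrict (Icc 0 1)

instance : IsProbabilityMeasure unitUniform := ⟨by simp [unitUniform]⟩

/-- The quantile transform of the law with density `m` on `[a/m, b/m]` and its remaining mass
at `1`. -/
noncomputable def windowPValue (m : ℕ) (a b u : ℝ) : ℝ :=
  if u ∈ Icc 0 (b - a) then (a + u) / m else 1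

section WindowPValue

variable {m : ℕ} {a b : ℝ}

lemma measurable_windowPValue (m : ℕ) (a b : ℝ) : Measurable (windowPValue m a b) :=
  Measurable.ite measurableSet_Icc (by fun_prop) measurable_const

lemma windowPValue_mem_Icc (ha : 0 ≤ a) (hb : b ≤ m) (u : ℝ) :
    windowPValue m a b u ∈ Icc 0 1 := by
  unfold windowPValue
  split_ifs with hu
  · exact ⟨by have := hu.1; positivity, div_le_one_of_le₀ (by linarith [hu.2]) m.cast_nonneg⟩
  · exact ⟨zero_le_one, le_rfl⟩

lemma max_min_sub_zero_eq (hab : a ≤ b) (x : ℝ) :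
    max (min b x - a) 0 = min b x - min a x := by
  rcases le_total x a with hxa | hax
  · rw [min_eq_right (hxa.trans hab), min_eq_right hxa, sub_self, max_eq_right (by linarith)]
  · rw [min_eq_left hax, max_eq_left (by simpa using le_min hab hax)]

lemma unitUniform_real_windowPValue_le (hm : 0 < m) (hab : a ≤ b) (hba : b - a ≤ 1) {t : ℝ}
    (ht : t < 1) :
    unitUniform.real {u | windowPValue m a b u ≤ t} = min b (m * t) - min a (m * t) := by
  have hm' : (0 : ℝ) < m := by exact_mod_cast hm
  have hset : {u | windowPValue m a b u ≤ t} ∩ Icc 0 1 = Icc 0 (min b (m * t) - a) := by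
    ext u
    simp only [windowPValue, mem_inter_iff, mem_ofPred_eq, mem_Icc]
    split_ifs with hu
    · rw [div_le_iff₀ hm', le_sub_iff_add_le, le_min_iff]
      constructor
      · rintro ⟨h, -⟩; exact ⟨hu.1, by linarith [hu.2], by linarith⟩
      · rintro ⟨hu0, hub, hut⟩; exact ⟨by linarith, hu0, by linarith⟩
    · simp only [not_and_or, not_le] at hu
      constructor
      · rintro ⟨h, -⟩; linarith
      · rintro ⟨hu0, hu'⟩
        rcases hu with hu | hu
        · linarith
        · linarith [min_le_left b (m * t)]
  rw [unitUniform, measureReal_restrict_apply' measurableSet_Icc, hset, Real.volume_real_Icc,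
    sub_zero, max_min_sub_zero_eq hab]

end WindowPValue

section WindowModel

variable (m : ℕ) (c : ℕ → ℝ)

noncomputable abbrev uniformCube : Measure (Fin m → ℝ) := Measure.pi fun _ => unitUniform

noncomputable def windowModel (i : Fin m) (ω : Fin m → ℝ) : ℝ :=
  windowPValue m (c i) (c ((i : ℕ) + 1)) (ω i)

lemma measurable_windowModel (i : Fin m) : Measurable (windowModel m c i) :=
  (measurable_windowPValue _ _ _).comp (measurable_pi_apply i)

lemma iIndepFun_windowModel : iIndepFun (windowModel m c) (uniformCube m) :=
  iIndepFun_pi fun i => (measurable_windowPValue m (c i) (c ((i : ℕ) + 1))).aemeasurable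

variable {m c}

lemma windowModel_mem_Icc (hc0 : ∀ k, 0 ≤ c k) (hcm : ∀ k, c k ≤ m) (i : Fin m)
    (ω : Fin m → ℝ) : windowModel m c i ω ∈ Icc 0 1 :=
  windowPValue_mem_Icc (hc0 _) (hcm _) _

lemma uniformCube_real_windowModel_le (hm : 0 < m) (hc : Monotone c)
    (hstep : ∀ k, c (k + 1) - c k ≤ 1) (i : Fin m) {t : ℝ} (ht : t < 1) :
    (uniformCube m).real {ω | windowModel m c i ω ≤ t} =
      min (c ((i : ℕ) + 1)) (m * t) - min (c i) (m * t) := by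
  rw [← unitUniform_real_windowPValue_le hm (hc (Nat.le_succ _)) (hstep _) ht]
  exact (measurePreserving_eval (fun _ => unitUniform) i).measureReal_preimage
    (measurableSet_le (measurable_windowPValue _ _ _) measurable_const).nullMeasurableSet

/-- The windows are consecutive, so the cdfs telescope to `min (c m) (m t) ≤ m t`. -/
theorem windowModel_average_le (hm : 0 < m) (hc0 : c 0 = 0) (hc : Monotone c)
    (hstep : ∀ k, c (k + 1) - c k ≤ 1) {t : ℝ} (ht : t ∈ Icc (0 : ℝ) 1) :
    (1 / m : ℝ) * ∑ i, (uniformCube m).real {ω | windowModel m c i ω ≤ t} ≤ t := by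
  have hm' : (0 : ℝ) < m := by exact_mod_cast hm
  rcases ht.2.lt_or_eq with ht1 | rfl
  · have htel : ∑ i : Fin m, (uniformCube m).real {ω | windowModel m c i ω ≤ t} =
        min (c m) (m * t) := by
      rw [Finset.sum_congr rfl fun i _ => uniformCube_real_windowModel_le hm hc hstep i ht1,
        Fin.sum_univ_eq_sum_range (fun k => min (c (k + 1)) (m * t) - min (c k) (m * t)),
        Finset.sum_range_sub (fun k => min (c k) (m * t)), hc0,
        min_eq_left (mul_nonneg m.cast_nonneg ht.1), sub_zero]
    calc (1 / m : ℝ) * ∑ i, (uniformCube m).real {ω | windowModel m c i ω ≤ t}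
        ≤ (1 / m : ℝ) * (m * t) := by rw [htel]; gcongr; exact min_le_right _ _
      _ = t := by field_simp
  · calc (1 / m : ℝ) * ∑ i, (uniformCube m).real {ω | windowModel m c i ω ≤ 1}
        ≤ (1 / m : ℝ) * ∑ _i : Fin m, 1 := by gcongr; exact measureReal_le_one
      _ = 1 := by simp [hm'.ne']

end WindowModel

noncomputable def bhWindows (q : ℝ) (k : ℕ) : ℝ := min (3 * q / 2 * k) (2 * q)

section BHWindows

variable {q : ℝ}

lemma bhWindows_zero (hq : 0 ≤ q) : bhWindows q 0 = 0 := by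
  simp [bhWindows, hq]

lemma bhWindows_one (hq : 0 ≤ q) : bhWindows q 1 = 3 * q / 2 := by
  rw [bhWindows, Nat.cast_one, mul_one, min_eq_left (by linarith)]

lemma bhWindows_two (hq : 0 ≤ q) : bhWindows q 2 = 2 * q := by
  rw [bhWindows, min_eq_right (by push_cast; linarith)]

lemma bhWindows_le (k : ℕ) : bhWindows q k ≤ 2 * q := min_le_right _ _

lemma bhWindows_nonneg (hq : 0 ≤ q) (k : ℕ) : 0 ≤ bhWindows q k :=
  le_min (by positivity) (by linarith)

lemma monotone_bhWindows (hq : 0 ≤ q) : Monotone (bhWindows q) := fun j k hjk =>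
  min_le_min_right _ (by gcongr)

lemma bhWindows_succ_sub_le (hq : 0 ≤ q) (k : ℕ) :
    bhWindows q (k + 1) - bhWindows q k ≤ 3 * q / 2 := by
  unfold bhWindows
  push_cast
  rcases le_total (3 * q / 2 * k) (2 * q) with h | h
  · rw [min_eq_left h]; linarith [min_le_left (3 * q / 2 * (k + 1)) (2 * q)]
  · rw [min_eq_right h, min_eq_right (by nlinarith)]; linarith

end BHWindows

section BHModel

variable {m : ℕ} {q : ℝ}

lemma uniformCube_real_bhWindows_le (hm : 0 < m) (hq0 : 0 ≤ q) (hq : q ≤ 2 / 3) (i : Fin m)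
    {x : ℝ} (hx : x < m) :
    (uniformCube m).real (windowModel m (bhWindows q) i ⁻¹' Iic (x / m)) =
      min (bhWindows q (i + 1)) x - min (bhWindows q i) x := by
  have hm' : (0 : ℝ) < m := by exact_mod_cast hm
  refine (uniformCube_real_windowModel_le hm (monotone_bhWindows hq0)
    (fun k => (bhWindows_succ_sub_le hq0 k).trans (by linarith)) i
    ((div_lt_one hm').2 hx)).trans ?_
  rw [mul_div_cancel₀ _ hm'.ne']

lemma uniformCube_real_bhWindows_zero_le (hm : 2 ≤ m) (hq0 : 0 ≤ q) (hq : q ≤ 2 / 3)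
    (i : Fin m) (hi : (i : ℕ) = 0) {x : ℝ} (hx0 : 0 ≤ x) (hx : x ≤ 2 * q) :
    (uniformCube m).real (windowModel m (bhWindows q) i ⁻¹' Iic (x / m)) = min (3 * q / 2) x := by
  have hm2 : (2 : ℝ) ≤ m := by exact_mod_cast hm
  rw [uniformCube_real_bhWindows_le (by omega) hq0 hq i (by linarith), hi, zero_add,
    bhWindows_one hq0, bhWindows_zero hq0, min_eq_left hx0, sub_zero]

lemma uniformCube_real_bhWindows_one_le (hm : 2 ≤ m) (hq0 : 0 ≤ q) (hq : q ≤ 2 / 3)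
    (i : Fin m) (hi : (i : ℕ) = 1) :
    (uniformCube m).real (windowModel m (bhWindows q) i ⁻¹' Iic (2 * q / m)) = q / 2 := by
  have hm2 : (2 : ℝ) ≤ m := by exact_mod_cast hm
  rw [uniformCube_real_bhWindows_le (by omega) hq0 hq i (by linarith), hi, bhWindows_two hq0,
    bhWindows_one hq0, min_self, min_eq_left (by linarith)]
  ring

/-- `p₀ ≤ q/m` forces a rejection (probability `q`); so does `q/m < p₀ ≤ 2q/m` together with
`p₁ ≤ 2q/m` (probability `(q/2)²` by independence). -/
theorem uniformCube_real_stepUp_bhWindows_ge (hm : 2 ≤ m) (hq0 : 0 ≤ q) (hq : q ≤ 2 / 3) :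
    q + (q / 2) ^ 2 ≤ (uniformCube m).real
      {ω | BH.StepUpRejects (fun i => windowModel m (bhWindows q) i ω) q} := by
  set μ := uniformCube m
  set P := windowModel m (bhWindows q)
  let i₀ : Fin m := ⟨0, by omega⟩
  let i₁ : Fin m := ⟨1, by omega⟩
  have hi : i₀ ≠ i₁ := by simp [i₀, i₁, Fin.ext_iff]
  set A := P i₀ ⁻¹' Iic (q / m)
  set B₀ := P i₀ ⁻¹' Ioc (q / m) (2 * q / m)
  set B₁ := P i₁ ⁻¹' Iic (2 * q / m)
  have hA : μ.real A = q := by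
    rw [uniformCube_real_bhWindows_zero_le hm hq0 hq i₀ rfl hq0 (by linarith),
      min_eq_right (by linarith)]
  have hB₀ : μ.real B₀ = q / 2 := by
    have hunion := measureReal_union (μ := μ)
      ((Iic_disjoint_Ioc (le_refl (q / m)) (c := 2 * q / m)).preimage (P i₀))
      (measurable_windowModel m _ i₀ measurableSet_Ioc)
    rw [← preimage_union, Iic_union_Ioc_eq_Iic (by gcongr; linarith), hA,
      uniformCube_real_bhWindows_zero_le hm hq0 hq i₀ rfl (by linarith) le_rfl,
      min_eq_left (by linarith)] at hunion
    linarith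
  have hB : μ.real (B₀ ∩ B₁) = q / 2 * (q / 2) := by
    rw [measureReal_def, ((iIndepFun_windowModel m _).indepFun hi).measure_inter_preimage_eq_mul
      _ _ measurableSet_Ioc measurableSet_Iic, ENNReal.toReal_mul, ← measureReal_def,
      ← measureReal_def, hB₀, uniformCube_real_bhWindows_one_le hm hq0 hq i₁ rfl]
  have hsub : A ∪ (B₀ ∩ B₁) ⊆ {ω | BH.StepUpRejects (fun i => P i ω) q} := by
    rintro ω (h | ⟨h₀, h₁⟩)
    · exact BH.stepUpRejects_of_card _ (Finset.singleton_nonempty i₀) (by simpa using show P i₀ ω ≤ q / m from h)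
    · refine BH.stepUpRejects_of_card _ (Finset.insert_nonempty i₀ {i₁}) ?_
      rw [Finset.card_pair hi]
      simpa [mul_comm q] using ⟨(show P i₀ ω ∈ Ioc _ _ from h₀).2, show P i₁ ω ≤ 2 * q / m from h₁⟩
  calc q + (q / 2) ^ 2 = μ.real (A ∪ (B₀ ∩ B₁)) := by
        rw [measureReal_union (((Iic_disjoint_Ioc le_rfl).preimage (P i₀)).mono_right
          inter_subset_left) ((measurable_windowModel m _ i₀ measurableSet_Ioc).inter
          (measurable_windowModel m _ i₁ measurableSet_Iic)), hA, hB]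
        ring
    _ ≤ μ.real {ω | BH.StepUpRejects (fun i => P i ω) q} := measureReal_mono hsub

end BHModel

/-- Counterexample: for `m ≥ 2` and `0 < q < 2/3`, there are independent p-values
satisfying average significance level control (with all hypotheses null) for which the
Benjamini–Hochberg procedure at level `q` has FDR at least `q + (q/(2m))²` (so FDR > q). -/
theorem stmt4 (m : ℕ) (hm : 2 ≤ m) (q : ℝ) (hq0 : 0 < q) (hq : q < 2/3) :
    ∃ (Ω : Type) (_ : MeasurableSpace Ω) (μ : Measure Ω) (_ : IsProbabilityMeasure μ)
      (p : Fin m → Ω → ℝ),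
      (∀ i, Measurable (p i)) ∧
      (∀ i ω, p i ω ∈ Set.Icc (0:ℝ) 1) ∧
      iIndepFun p μ ∧
      (∀ t ∈ Set.Icc (0:ℝ) 1,
        (1 / m : ℝ) * ∑ i, (μ {ω | p i ω ≤ t}).toReal ≤ t) ∧
      q + (q / (2 * m))^2 ≤
        ∫ ω, (rejCount m (fun i => p i ω) (bhCutoff m q (fun i => p i ω)) : ℝ) /
          max (rejCount m (fun i => p i ω) (bhCutoff m q (fun i => p i ω)) : ℝ) 1 ∂μ := by
  have hm' : (2 : ℝ) ≤ m := by exact_mod_cast hm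
  have hstep (k : ℕ) : bhWindows q (k + 1) - bhWindows q k ≤ 1 :=
    (bhWindows_succ_sub_le hq0.le k).trans (by linarith)
  refine ⟨Fin m → ℝ, inferInstance, uniformCube m, inferInstance, windowModel m (bhWindows q),
    measurable_windowModel m _,
    windowModel_mem_Icc (bhWindows_nonneg hq0.le) (fun k => (bhWindows_le k).trans (by linarith)),
    iIndepFun_windowModel m _,
    fun t ht => windowModel_average_le (by omega) (bhWindows_zero hq0.le)
      (monotone_bhWindows hq0.le) hstep ht, ?_⟩
  rw [BH.integral_fdp_bh_eq _ (measurable_windowModel m _) hq0.le (by linarith)]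
  calc q + (q / (2 * m)) ^ 2 ≤ q + (q / 2) ^ 2 := by gcongr; linarith
    _ ≤ _ := uniformCube_real_stepUp_bhWindows_ge hm hq0.le hq.le
end

section
/- Suppose p_1,...,p_m are independent [0,1]-valued random variables and H_0 ⊆ {1,...,m} satisfies average significance level control: (1/m)·Σ_{i∈H_0} P(p_i ≤ t) ≤ t. Fix t ∈ [0,1]. Let V(t) = #{i ∈ H_0 : p_i ≤ t}, S(t) = #{i ∉ H_0 : p_i ≤ t}, R(t) = V(t) + S(t). Then E[m·t/(R(t) ∨ 1)] ≥ E[V(t)/(R(t) ∨ 1)]; that is, the Benjamini–Hochberg estimate FDR̂(t) = m·t/(R(t) ∨ 1) is an upwardly biased estimate of the FDR of the fixed rejection region procedure. -/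
/-!
On the event `{p i ≤ t}` the total number of rejections is `R = R₋ᵢ + 1`, where `R₋ᵢ` counts the
rejections among the other hypotheses; hence `1{p i ≤ t} / (R ∨ 1) = 1{p i ≤ t} / (R₋ᵢ + 1)`, a
product of two independent factors. Taking expectations and using `R ∨ 1 ≤ R₋ᵢ + 1` gives
`E[1{p i ≤ t} / (R ∨ 1)] ≤ P(p i ≤ t) · E[1 / (R ∨ 1)]`. Summing over `i ∈ H₀` and applying the
average significance level condition `∑_{i ∈ H₀} P(p i ≤ t) ≤ m t` yields the claim.
-/

open MeasureTheory ProbabilityTheory Set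

lemma ProbabilityTheory.iIndepFun.iIndepSet_preimage {Ω ι : Type*} {β : ι → Type*}
    [MeasurableSpace Ω] {μ : Measure Ω} {mβ : ∀ i, MeasurableSpace (β i)} {f : ∀ i, Ω → β i}
    (hf : iIndepFun f μ) (hmeas : ∀ i, Measurable (f i)) {A : ∀ i, Set (β i)}
    (hA : ∀ i, MeasurableSet (A i)) :
    iIndepSet (fun i => f i ⁻¹' A i) μ :=
  (iIndepSet_iff_meas_biInter fun i => hmeas i (hA i)).2 fun _ =>
    hf.meas_biInter fun i _ => ⟨A i, hA i, rfl⟩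

namespace FDREstimate

open Finset

variable {Ω ι : Type*} {E : ι → Set Ω}

/-- With `E j = {p j ≤ t}`, `numOccur E s` is `V(t)`, `S(t)` or `R(t)` for `s = H₀`, `H₀ᶜ`,
`univ`. -/
noncomputable def numOccur (E : ι → Set Ω) (s : Finset ι) (ω : Ω) : ℝ :=
  ∑ j ∈ s, (E j).indicator 1 ω

lemma numOccur_nonneg (E : ι → Set Ω) (s : Finset ι) (ω : Ω) : 0 ≤ numOccur E s ω :=
  sum_nonneg fun _ _ => Set.indicator_nonneg (fun _ _ => zero_le_one) ω

lemma cast_ncard_setOf_mem_and_eq_numOccur (E : ι → Set Ω) (s : Finset ι) (ω : Ω) :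
    (Set.ncard {i | i ∈ s ∧ ω ∈ E i} : ℝ) = numOccur E s ω := by
  classical
  rw [← coe_filter, Set.ncard_coe_finset, card_filter]
  push_cast
  simp [numOccur, Set.indicator_apply]

section Fintype

variable [Fintype ι] [DecidableEq ι]

lemma numOccur_univ_eq_indicator_add (E : ι → Set Ω) (i : ι) (ω : Ω) :
    numOccur E univ ω = (E i).indicator 1 ω + numOccur E (univ.erase i) ω :=
  (add_sum_erase _ _ (mem_univ i)).symm

lemma numOccur_add_numOccur_compl (E : ι → Set Ω) (s : Finset ι) (ω : Ω) :
    numOccur E s ω + numOccur E sᶜ ω = numOccur E univ ω :=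
  sum_add_sum_compl s _

lemma indicator_div_max_numOccur_eq (E : ι → Set Ω) (i : ι) (ω : Ω) :
    (E i).indicator (1 : Ω → ℝ) ω / max (numOccur E univ ω) 1 =
      (E i).indicator 1 ω / (numOccur E (univ.erase i) ω + 1) := by
  by_cases hi : ω ∈ E i
  · rw [numOccur_univ_eq_indicator_add E i, Set.indicator_of_mem hi, Pi.one_apply, add_comm,
      max_eq_left (by linarith [numOccur_nonneg E (univ.erase i) ω])]
  · simp [hi]

lemma inv_numOccur_erase_add_one_le (E : ι → Set Ω) (i : ι) (ω : Ω) :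
    (numOccur E (univ.erase i) ω + 1)⁻¹ ≤ (max (numOccur E univ ω) 1)⁻¹ := by
  have hrest := numOccur_nonneg E (univ.erase i) ω
  have hi : (E i).indicator (1 : Ω → ℝ) ω ≤ 1 := Set.indicator_le_self' (fun _ _ => zero_le_one) ω
  refine inv_anti₀ (by positivity) (max_le ?_ (by linarith))
  rw [numOccur_univ_eq_indicator_add E i]
  linarith

end Fintype

variable [MeasurableSpace Ω] {μ : Measure Ω}

lemma measurable_numOccur (hE : ∀ i, MeasurableSet (E i)) (s : Finset ι) :
    Measurable (numOccur E s) := by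
  unfold numOccur
  exact measurable_sum _ fun j _ => measurable_one.indicator (hE j)

lemma integrable_inv_max_one [IsFiniteMeasure μ] {f : Ω → ℝ} (hf : Measurable f) :
    Integrable (fun ω => (max (f ω) 1)⁻¹) μ := by
  refine .of_bound (hf.max measurable_const).inv.aestronglyMeasurable 1
    (Filter.Eventually.of_forall fun ω => ?_)
  rw [Real.norm_eq_abs, abs_of_pos (by positivity)]
  exact inv_le_one_of_one_le₀ (le_max_right _ _)

variable [Fintype ι] [DecidableEq ι]

lemma indepFun_indicator_inv_numOccur_erase_add_one (hE : ∀ i, MeasurableSet (E i))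
    (hindep : iIndepSet E μ) (i : ι) :
    IndepFun ((E i).indicator (1 : Ω → ℝ)) (fun ω => (numOccur E (univ.erase i) ω + 1)⁻¹) μ := by
  have h := (hindep.iIndepFun_indicator (β := ℝ)).indepFun_finsetSum_of_notMem
    (fun j => measurable_one.indicator (hE j)) (notMem_erase i univ)
  have := h.symm.comp measurable_id (measurable_add_const (1 : ℝ)).inv
  convert this using 1
  · rfl
  · ext ω
    simp only [numOccur, Function.comp_apply, Finset.sum_apply, Pi.inv_apply]
    rfl

lemma integral_indicator_div_max_numOccur_le [IsProbabilityMeasure μ]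
    (hE : ∀ i, MeasurableSet (E i)) (hindep : iIndepSet E μ) (i : ι) :
    ∫ ω, (E i).indicator 1 ω / max (numOccur E univ ω) 1 ∂μ ≤
      μ.real (E i) * ∫ ω, (max (numOccur E univ ω) 1)⁻¹ ∂μ := by
  have hrest_meas : Measurable fun ω => (numOccur E (univ.erase i) ω + 1)⁻¹ :=
    ((measurable_numOccur hE _).add_const 1).inv
  calc ∫ ω, (E i).indicator 1 ω / max (numOccur E univ ω) 1 ∂μ
      = ∫ ω, (E i).indicator 1 ω * (numOccur E (univ.erase i) ω + 1)⁻¹ ∂μ := by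
        congr 1 with ω
        rw [indicator_div_max_numOccur_eq, div_eq_mul_inv]
    _ = μ.real (E i) * ∫ ω, (numOccur E (univ.erase i) ω + 1)⁻¹ ∂μ := by
        rw [(indepFun_indicator_inv_numOccur_erase_add_one hE hindep i
          ).integral_fun_mul_eq_mul_integral (measurable_one.indicator (hE i)).aestronglyMeasurable
          hrest_meas.aestronglyMeasurable, integral_indicator_one (hE i)]
    _ ≤ μ.real (E i) * ∫ ω, (max (numOccur E univ ω) 1)⁻¹ ∂μ := by
        refine mul_le_mul_of_nonneg_left ?_ measureReal_nonneg
        exact integral_mono_of_nonneg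
          (.of_forall fun ω => inv_nonneg.2 (by linarith [numOccur_nonneg E (univ.erase i) ω]))
          (integrable_inv_max_one (μ := μ) (measurable_numOccur hE univ))
          (.of_forall (inv_numOccur_erase_add_one_le E i))

lemma integral_numOccur_div_max_numOccur_le [IsProbabilityMeasure μ]
    (hE : ∀ i, MeasurableSet (E i)) (hindep : iIndepSet E μ) (s : Finset ι) :
    ∫ ω, numOccur E s ω / max (numOccur E univ ω) 1 ∂μ ≤
      (∑ i ∈ s, μ.real (E i)) * ∫ ω, (max (numOccur E univ ω) 1)⁻¹ ∂μ := by
  have hint : ∀ i ∈ s, Integrable (fun ω => (E i).indicator 1 ω / max (numOccur E univ ω) 1) μ :=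
    fun i _ => ((integrable_inv_max_one (measurable_numOccur hE univ)).indicator (hE i)).congr
      (.of_forall fun ω => by by_cases hω : ω ∈ E i <;> simp [hω, div_eq_mul_inv])
  calc ∫ ω, numOccur E s ω / max (numOccur E univ ω) 1 ∂μ
      = ∑ i ∈ s, ∫ ω, (E i).indicator 1 ω / max (numOccur E univ ω) 1 ∂μ := by
        rw [← integral_finsetSum s hint]
        congr 1 with ω
        exact sum_div ..
    _ ≤ ∑ i ∈ s, μ.real (E i) * ∫ ω, (max (numOccur E univ ω) 1)⁻¹ ∂μ :=
        sum_le_sum fun i _ => integral_indicator_div_max_numOccur_le hE hindep i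
    _ = (∑ i ∈ s, μ.real (E i)) * ∫ ω, (max (numOccur E univ ω) 1)⁻¹ ∂μ := (sum_mul ..).symm

end FDREstimate

theorem stmt8_general {Ω : Type} [MeasurableSpace Ω] (μ : Measure Ω) [IsProbabilityMeasure μ]
    (m : ℕ) (hm : 0 < m) (p : Fin m → Ω → ℝ)
    (hmeas : ∀ i, Measurable (p i))
    (hindep : iIndepFun p μ)
    (H0 : Finset (Fin m))
    (havg : ∀ s ∈ Set.Icc (0:ℝ) 1,
      (1 / m : ℝ) * ∑ i ∈ H0, (μ {ω | p i ω ≤ s}).toReal ≤ s)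
    (t : ℝ) (ht : t ∈ Set.Icc (0:ℝ) 1) :
    ∫ ω, (Set.ncard {i | i ∈ H0 ∧ p i ω ≤ t} : ℝ) /
        max ((Set.ncard {i | i ∈ H0 ∧ p i ω ≤ t} : ℝ) +
          (Set.ncard {i | i ∉ H0 ∧ p i ω ≤ t} : ℝ)) 1 ∂μ ≤
      ∫ ω, (m : ℝ) * t /
        max ((Set.ncard {i | i ∈ H0 ∧ p i ω ≤ t} : ℝ) +
          (Set.ncard {i | i ∉ H0 ∧ p i ω ≤ t} : ℝ)) 1 ∂μ := by
  open FDREstimate in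
  let E : Fin m → Set Ω := fun i => p i ⁻¹' Iic t
  have hE : ∀ i, MeasurableSet (E i) := fun i => hmeas i measurableSet_Iic
  have hV : ∀ ω, (Set.ncard {i | i ∈ H0 ∧ p i ω ≤ t} : ℝ) = numOccur E H0 ω :=
    cast_ncard_setOf_mem_and_eq_numOccur E H0
  have hR : ∀ ω, (Set.ncard {i | i ∈ H0 ∧ p i ω ≤ t} : ℝ) +
      Set.ncard {i | i ∉ H0 ∧ p i ω ≤ t} = numOccur E Finset.univ ω := fun ω => by
    rw [hV, ← numOccur_add_numOccur_compl E H0, ← cast_ncard_setOf_mem_and_eq_numOccur E H0ᶜ]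
    simp [E]
  have hsum : ∑ i ∈ H0, μ.real (E i) ≤ m * t := by
    have := havg t ht
    rwa [one_div_mul_eq_div, div_le_iff₀' (by exact_mod_cast hm)] at this
  simp_rw [hR, hV]
  calc ∫ ω, numOccur E H0 ω / max (numOccur E Finset.univ ω) 1 ∂μ
      ≤ (∑ i ∈ H0, μ.real (E i)) * ∫ ω, (max (numOccur E Finset.univ ω) 1)⁻¹ ∂μ :=
        integral_numOccur_div_max_numOccur_le hE
          (hindep.iIndepSet_preimage hmeas fun _ => measurableSet_Iic) H0
    _ ≤ m * t * ∫ ω, (max (numOccur E Finset.univ ω) 1)⁻¹ ∂μ :=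
        mul_le_mul_of_nonneg_right hsum (integral_nonneg fun ω => by positivity)
    _ = ∫ ω, m * t / max (numOccur E Finset.univ ω) 1 ∂μ := by
        simp only [div_eq_mul_inv, integral_const_mul]

/-- Under independent p-values satisfying average significance level control, the
Benjamini–Hochberg estimate `m·t/(R(t) ∨ 1)` is an upwardly biased estimate of the FDR
`E[V(t)/(R(t) ∨ 1)]` of the fixed rejection region procedure at cutoff `t`. -/
theorem stmt8 {Ω : Type} [MeasurableSpace Ω] (μ : Measure Ω) [IsProbabilityMeasure μ]
    (m : ℕ) (hm : 0 < m) (p : Fin m → Ω → ℝ)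
    (hmeas : ∀ i, Measurable (p i))
    (hp : ∀ i ω, p i ω ∈ Set.Icc (0:ℝ) 1)
    (hindep : iIndepFun p μ)
    (H0 : Finset (Fin m))
    (havg : ∀ s ∈ Set.Icc (0:ℝ) 1,
      (1 / m : ℝ) * ∑ i ∈ H0, (μ {ω | p i ω ≤ s}).toReal ≤ s)
    (t : ℝ) (ht : t ∈ Set.Icc (0:ℝ) 1) :
    ∫ ω, (Set.ncard {i | i ∈ H0 ∧ p i ω ≤ t} : ℝ) /
        max ((Set.ncard {i | i ∈ H0 ∧ p i ω ≤ t} : ℝ) +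
          (Set.ncard {i | i ∉ H0 ∧ p i ω ≤ t} : ℝ)) 1 ∂μ ≤
      ∫ ω, (m : ℝ) * t /
        max ((Set.ncard {i | i ∈ H0 ∧ p i ω ≤ t} : ℝ) +
          (Set.ncard {i | i ∉ H0 ∧ p i ω ≤ t} : ℝ)) 1 ∂μ :=
  stmt8_general μ m hm p hmeas hindep H0 havg t ht
end

section
/- Suppose V(t)/m ≤ t + o_P(1) uniformly in the sense that inf_{t∈[0,1]}[t − V(t)/m] ≥ o_P(1), and there exist t̲ ∈ (0,1] and η > 0 with P(R(t̲)/m ≥ η/2) → 1, where R(t) = #{i : p_i ≤ t} and V(t) = #{i ∈ H_0 : p_i ≤ t}. Then inf_{t∈[t̲,1]} [FDR̂(t) − FDP_t] ≥ o_P(1), where FDR̂(t) = m·t/(R(t)∨1) and FDP_t = V(t)/(R(t)∨1); i.e., for every ε > 0, P(∃ t ∈ [t̲,1] : FDR̂(t) − FDP_t < −ε) → 0. -/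
open MeasureTheory Filter Set Topology

/-! Write `V ≤ R` for the null and total rejection counts at level `t`. If
`(m t - V) / (R ∨ 1) < -ε`, then `V > m t`, and since `R ∨ 1 ≥ V` we get
`m t - V < -ε V < -ε m t`, i.e. `t - V / m < -ε t ≤ -ε t̲`. So the bad event for
`FDR̂ - FDP` at tolerance `ε` lies inside the bad event for `t - V / m` at tolerance
`ε t̲`, whose probability tends to zero. -/

lemma sub_div_lt_neg_mul_of_div_sub_div_max_lt {n t v r ε : ℝ} (hv : 0 ≤ v) (hvr : v ≤ r)
    (hvn : v ≤ n) (hε : 0 ≤ ε) (h : n * t / max r 1 - v / max r 1 < -ε) :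
    t - v / n < -(ε * t) := by
  have hM : 0 < max r 1 := lt_of_lt_of_le one_pos (le_max_right r 1)
  rw [div_sub_div_same, div_lt_iff₀ hM] at h
  have hεv : ε * v ≤ ε * max r 1 := mul_le_mul_of_nonneg_left (hvr.trans (le_max_left r 1)) hε
  have hnt : n * t < v := by linarith [mul_nonneg hε hM.le]
  have hn : 0 < n := by
    refine lt_of_le_of_ne (hv.trans hvn) ?_
    rintro rfl
    obtain rfl : v = 0 := le_antisymm hvn hv
    simp at hnt
  have hεnt : ε * (n * t) ≤ ε * v := mul_le_mul_of_nonneg_left hnt.le hε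
  have hrewrite : t - v / n = (n * t - v) / n := by field_simp
  rw [hrewrite, div_lt_iff₀ hn]
  linarith

lemma setOf_exists_fdr_sub_fdp_lt_subset {Ω : Type*} {n : ℕ} (p : Fin n → Ω → ℝ)
    (H0 : Finset (Fin n)) {tlow ε : ℝ} (htlow : 0 < tlow) (hε : 0 ≤ ε) :
    {ω | ∃ t ∈ Icc tlow 1,
        (n : ℝ) * t / max (ncard {i : Fin n | p i ω ≤ t} : ℝ) 1 -
          (ncard {i | i ∈ H0 ∧ p i ω ≤ t} : ℝ) /
            max (ncard {i : Fin n | p i ω ≤ t} : ℝ) 1 < -ε} ⊆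
      {ω | ∃ t ∈ Icc (0 : ℝ) 1,
        t - (ncard {i | i ∈ H0 ∧ p i ω ≤ t} : ℝ) / n < -(ε * tlow)} := by
  rintro ω ⟨t, ⟨htlow_le, ht_le⟩, hlt⟩
  refine ⟨t, ⟨htlow.le.trans htlow_le, ht_le⟩, ?_⟩
  have hVR : ncard {i | i ∈ H0 ∧ p i ω ≤ t} ≤ ncard {i : Fin n | p i ω ≤ t} :=
    ncard_le_ncard (fun i hi => hi.2) (toFinite _)
  have hVn : ncard {i | i ∈ H0 ∧ p i ω ≤ t} ≤ n := by
    simpa using ncard_le_ncard (subset_univ {i | i ∈ H0 ∧ p i ω ≤ t}) (toFinite _)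
  have hεt : ε * tlow ≤ ε * t := mul_le_mul_of_nonneg_left htlow_le hε
  have hbound := sub_div_lt_neg_mul_of_div_sub_div_max_lt (Nat.cast_nonneg _)
    (by exact_mod_cast hVR) (by exact_mod_cast hVn) hε hlt
  linarith

theorem stmt11_general {Ω : ℕ → Type} [∀ n, MeasurableSpace (Ω n)]
    (μ : ∀ n, Measure (Ω n))
    (p : ∀ n, Fin n → Ω n → ℝ) (H0 : ∀ n, Finset (Fin n))
    (hunif : ∀ ε > (0:ℝ),
      Tendsto (fun n => μ n {ω | ∃ t ∈ Set.Icc (0:ℝ) 1,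
        t - (Set.ncard {i | i ∈ H0 n ∧ p n i ω ≤ t} : ℝ) / n < -ε}) atTop (nhds 0))
    (tlow : ℝ) (htlow : tlow ∈ Set.Ioc (0:ℝ) 1) :
    ∀ ε > (0:ℝ),
      Tendsto (fun n => μ n {ω | ∃ t ∈ Set.Icc tlow 1,
        (n : ℝ) * t / max (Set.ncard {i : Fin n | p n i ω ≤ t} : ℝ) 1 -
          (Set.ncard {i | i ∈ H0 n ∧ p n i ω ≤ t} : ℝ) /
            max (Set.ncard {i : Fin n | p n i ω ≤ t} : ℝ) 1 < -ε})
        atTop (nhds 0) := by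
  intro ε hε
  exact tendsto_of_tendsto_of_tendsto_of_le_of_le tendsto_const_nhds
    (hunif (ε * tlow) (mul_pos hε htlow.1)) (fun n => zero_le)
    (fun n => measure_mono (setOf_exists_fdr_sub_fdp_lt_subset (p n) (H0 n) htlow.1 hε.le))

/-- If `inf_{t∈[0,1]}[t − V(t)/m] ≥ o_P(1)` and `P(R(t̲)/m ≥ η/2) → 1` for some
`t̲ ∈ (0,1]` and `η > 0`, then `inf_{t∈[t̲,1]}[FDR̂(t) − FDP_t] ≥ o_P(1)`, where
`FDR̂(t) = m·t/(R(t)∨1)` and `FDP_t = V(t)/(R(t)∨1)`. -/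
theorem stmt11 {Ω : ℕ → Type} [∀ n, MeasurableSpace (Ω n)]
    (μ : ∀ n, Measure (Ω n)) (hμ : ∀ n, IsProbabilityMeasure (μ n))
    (p : ∀ n, Fin n → Ω n → ℝ) (H0 : ∀ n, Finset (Fin n))
    (hp : ∀ n i ω, p n i ω ∈ Set.Icc (0:ℝ) 1)
    (hunif : ∀ ε > (0:ℝ),
      Tendsto (fun n => μ n {ω | ∃ t ∈ Set.Icc (0:ℝ) 1,
        t - (Set.ncard {i | i ∈ H0 n ∧ p n i ω ≤ t} : ℝ) / n < -ε}) atTop (nhds 0))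
    (tlow : ℝ) (htlow : tlow ∈ Set.Ioc (0:ℝ) 1) (η : ℝ) (hη : 0 < η)
    (hR : Tendsto (fun n => μ n {ω |
        η / 2 ≤ (Set.ncard {i : Fin n | p n i ω ≤ tlow} : ℝ) / n}) atTop (nhds 1)) :
    ∀ ε > (0:ℝ),
      Tendsto (fun n => μ n {ω | ∃ t ∈ Set.Icc tlow 1,
        (n : ℝ) * t / max (Set.ncard {i : Fin n | p n i ω ≤ t} : ℝ) 1 -
          (Set.ncard {i | i ∈ H0 n ∧ p n i ω ≤ t} : ℝ) /
            max (Set.ncard {i : Fin n | p n i ω ≤ t} : ℝ) 1 < -ε})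
        atTop (nhds 0) :=
  stmt11_general μ p H0 hunif tlow htlow
end
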